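/- For any k-subsets I, J of [n], a legal path from (I,J) to (K,L) exists only if (I,J) ≤ (K,L) in the partial order where (I,J) ≤ (C,D) means the r-th smallest element of I is at most the r-th smallest element of C for all r; moreover each single swap step strictly increases the pair in this order. -/

import Mathlib

/-- A `(k,n)`-partial noncrossing pairing: a noncrossing matching `τ` (a set of pairs
`(a,b)` with `a < b`, pairwise disjoint endpoints in `{1,…,n}`, no two pairs crossing)
of a subset of `{1,…,n}`, together with a set `T` of marked vertices disjoint from the
endpoints, with `|T| + |τ| = k`. -/
def IsPNP (k n : ℕ) (τ : Finset (ℕ × ℕ)) (T : Finset ℕ) : Prop :=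
  (∀ p ∈ τ, p.1 < p.2 ∧ p.1 ∈ Finset.Icc 1 n ∧ p.2 ∈ Finset.Icc 1 n) ∧
  T ⊆ Finset.Icc 1 n ∧
  (∀ p ∈ τ, ∀ q ∈ τ, p ≠ q → p.1 ≠ q.1 ∧ p.1 ≠ q.2 ∧ p.2 ≠ q.1 ∧ p.2 ≠ q.2) ∧
  (∀ p ∈ τ, p.1 ∉ T ∧ p.2 ∉ T) ∧
  (∀ p ∈ τ, ∀ q ∈ τ, ¬(p.1 < q.1 ∧ q.1 < p.2 ∧ p.2 < q.2)) ∧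
  T.card + τ.card = k

/-- The map `θ` from partial noncrossing pairings to pairs of `k`-subsets:
`I₁ = T ∪ {smaller endpoints}`, `I₂ = T ∪ {larger endpoints}`. -/
def theta (τ : Finset (ℕ × ℕ)) (T : Finset ℕ) : Finset ℕ × Finset ℕ :=
  (T ∪ τ.image Prod.fst, T ∪ τ.image Prod.snd)

/-- `(I,J)` is a standard pair of `k`-subsets of `{1,…,n}`: the `r`-th smallest element
of `I` is at most the `r`-th smallest element of `J` for all `r` (so `I` and `J` form
the two columns of a semistandard tableau of shape `2^k`). -/
def IsStandardPair (k n : ℕ) (I J : Finset ℕ) : Prop :=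
  I.card = k ∧ J.card = k ∧ I ⊆ Finset.Icc 1 n ∧ J ⊆ Finset.Icc 1 n ∧
  ∀ r, r < k → (I.sort (· ≤ ·)).getD r 0 ≤ (J.sort (· ≤ ·)).getD r 0

/-- `τ` is the partial noncrossing matching `θ⁻¹(I,J)` associated to the pair `(I,J)`:
the marked vertices are `I ∩ J`, and `θ` sends `(τ, I ∩ J)` to `(I,J)`. -/
def Matching (k n : ℕ) (I J : Finset ℕ) (τ : Finset (ℕ × ℕ)) : Prop :=
  IsPNP k n τ (I ∩ J) ∧ (I ∩ J) ∪ τ.image Prod.fst = I ∧ (I ∩ J) ∪ τ.image Prod.snd = J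

/-- The elements of a `k`-subset listed in increasing order, as a tuple. -/
def sortedTuple (k : ℕ) (I : Finset ℕ) : Fin k → ℕ := fun r =>
  (I.sort (· ≤ ·)).getD (r : ℕ) 0

/-- Componentwise (Gale) order on `k`-subsets: the `r`-th smallest element of `I` is at
most the `r`-th smallest element of `C` for all `r < k`. -/
def FLe (k : ℕ) (I C : Finset ℕ) : Prop :=
  ∀ r, r < k → (I.sort (· ≤ ·)).getD r 0 ≤ (C.sort (· ≤ ·)).getD r 0

/-- One swap step `(𝐈,J) →_a (𝐈',J')`: for a strand `(i_a, j)` of the matching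
`τ(𝐈,J)` (with `i_a` the `a`-th entry of the tuple `𝐈`), replace `i_a` by `j` in the
tuple and `j` by `i_a` in `J`, provided the resulting pair is standard. -/
def Step (k n : ℕ) (a : Fin k) (p q : (Fin k → ℕ) × Finset ℕ) : Prop :=
  ∃ τ j, Matching k n (Finset.univ.image p.1) p.2 τ ∧ (p.1 a, j) ∈ τ ∧
    q.1 = Function.update p.1 a j ∧ q.2 = insert (p.1 a) (p.2.erase j) ∧
    IsStandardPair k n (Finset.univ.image q.1) q.2

/-- A legal path: a sequence of swap steps with weakly decreasing indices
`a_1 ≥ a_2 ≥ ⋯ ≥ a_r`, recorded by its list of states and its list of indices. -/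
def IsLegalPath (k n : ℕ) (states : List ((Fin k → ℕ) × Finset ℕ))
    (idxs : List (Fin k)) : Prop :=
  states.length = idxs.length + 1 ∧
  (∀ t a p q, idxs[t]? = some a → states[t]? = some p →
    states[t + 1]? = some q → Step k n a p q) ∧
  idxs.Chain' (fun a b => b ≤ a)

/-!
A step replaces the entry `i_a` of `I` by the other endpoint `j` of its strand, which is larger
than `i_a` and does not lie in `I`. Moving one element of a set up can only lower its counting
function `m ↦ #{y ∈ I | y < m}`, and the `r`-th smallest element is recovered from the counting
function through the Galois connection between `Nat.count` and `Nat.nth`; hence the sorted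
tuple increases componentwise, and strictly since `j ∉ I`. Along a legal path these
inequalities compose.
-/

open Finset Function

lemma Finset.card_filter_insert_erase_le {α : Type*} [DecidableEq α] {s : Finset α}
    {p : α → Prop} [DecidablePred p] {x j : α} (hx : x ∈ s) (hpx : p j → p x) :
    #{y ∈ insert j (s.erase x) | p y} ≤ #{y ∈ s | p y} := by
  rw [filter_insert, filter_erase]
  split_ifs with hj
  · calc #(insert j ({y ∈ s | p y}.erase x)) ≤ #({y ∈ s | p y}.erase x) + 1 := card_insert_le _ _
      _ = #{y ∈ s | p y} := card_erase_add_one (mem_filter.2 ⟨hx, hpx hj⟩)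
  · exact card_le_card (erase_subset _ _)

lemma image_update_univ {ι α : Type*} [Fintype ι] [DecidableEq ι] [DecidableEq α] {f : ι → α}
    (hf : Injective f) (a : ι) (j : α) :
    univ.image (update f a j) = insert j ((univ.image f).erase (f a)) := by
  ext y
  simp only [mem_image, mem_univ, true_and, mem_insert, mem_erase]
  constructor
  · rintro ⟨b, rfl⟩
    rcases eq_or_ne b a with rfl | hba
    · simp
    · simp [update_of_ne hba, hf.ne hba]
  · rintro (rfl | ⟨hy, b, rfl⟩)
    · exact ⟨a, update_self _ _ _⟩
    · exact ⟨b, update_of_ne (by rintro rfl; exact hy rfl) _ _⟩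

lemma injective_of_card_image_univ {ι α : Type*} [Fintype ι] [DecidableEq α] {f : ι → α}
    (h : #(univ.image f) = Fintype.card ι) : Injective f := by
  rw [← card_univ, card_image_iff, coe_univ] at h
  exact Set.injOn_univ.mp h

lemma Finset.finite_ofPred_mem (A : Finset ℕ) : (Set.ofPred (· ∈ A)).Finite := A.finite_toSet

lemma Finset.nth_mem_eq_sort_getD (A : Finset ℕ) (r : ℕ) :
    Nat.nth (· ∈ A) r = (A.sort (· ≤ ·)).getD r 0 := by
  rw [Nat.nth_eq_getD_sort A.finite_ofPred_mem]
  congr; ext; simp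

lemma Finset.count_mem_eq_card_filter_lt (A : Finset ℕ) (m : ℕ) :
    Nat.count (· ∈ A) m = #{y ∈ A | y < m} := by
  rw [Nat.count_eq_card_filter_range]
  congr 1; ext; simp [and_comm]

lemma FLe.trans {k : ℕ} {A B C : Finset ℕ} (hAB : FLe k A B) (hBC : FLe k B C) : FLe k A C :=
  fun r hr => (hAB r hr).trans (hBC r hr)

lemma fle_of_count_le {k : ℕ} {A B : Finset ℕ} (hB : #B = k)
    (h : ∀ m, Nat.count (· ∈ B) m ≤ Nat.count (· ∈ A) m) : FLe k A B := by
  intro r hr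
  have hrB : r < #B.finite_ofPred_mem.toFinset := by simpa [hB]
  rw [← A.nth_mem_eq_sort_getD, ← B.nth_mem_eq_sort_getD, ← Nat.lt_succ_iff]
  apply Nat.nth_lt_of_lt_count
  calc r < Nat.count (· ∈ B) (Nat.nth (· ∈ B) r) + 1 := by
        rw [Nat.count_nth_of_lt_card_finite _ hrB]; omega
    _ = Nat.count (· ∈ B) (Nat.nth (· ∈ B) r + 1) := by
        rw [Nat.count_succ, if_pos (Nat.nth_mem_of_lt_card _ hrB)]
    _ ≤ _ := h _

namespace Matching

variable {k n : ℕ} {I J : Finset ℕ} {τ : Finset (ℕ × ℕ)}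

lemma card_left (h : Matching k n I J τ) : #I = k := by
  obtain ⟨⟨-, -, hdist, hmark, -, hcard⟩, hI, -⟩ := h
  have hinj : Set.InjOn Prod.fst (τ : Set (ℕ × ℕ)) := fun s hs t ht hst => by
    by_contra hne; exact (hdist s hs t ht hne).1 hst
  have hdisj : Disjoint (I ∩ J) (τ.image Prod.fst) := by
    simp only [disjoint_right, mem_image]
    rintro _ ⟨s, hs, rfl⟩
    exact (hmark s hs).1
  rw [← hcard, ← card_image_of_injOn hinj, ← card_union_of_disjoint hdisj, hI]

lemma snd_notMem_left {x j : ℕ} (h : Matching k n I J τ) (hxj : (x, j) ∈ τ) : j ∉ I := by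
  obtain ⟨⟨hlt, -, hdist, hmark, -, -⟩, hI, -⟩ := h
  rw [← hI, mem_union, mem_image, not_or, not_exists]
  refine ⟨(hmark _ hxj).2, fun s ⟨hs, hsj⟩ => ?_⟩
  rcases eq_or_ne s (x, j) with rfl | hne
  · exact (hlt _ hs).1.ne hsj
  · exact (hdist s hs _ hxj hne).2.1 hsj

end Matching

lemma sortedTuple_eq_orderEmbOfFin {k : ℕ} {I : Finset ℕ} (hI : #I = k) :
    sortedTuple k I = I.orderEmbOfFin hI := by
  funext r
  rw [orderEmbOfFin_apply, sortedTuple, List.getD_eq_getElem]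
  rfl

lemma image_sortedTuple {k : ℕ} {I : Finset ℕ} (hI : #I = k) :
    univ.image (sortedTuple k I) = I := by
  rw [sortedTuple_eq_orderEmbOfFin hI, ← coe_inj, coe_image, coe_univ, Set.image_univ,
    range_orderEmbOfFin]

lemma Step.fle_and_ne {k n : ℕ} {a : Fin k} {p q : (Fin k → ℕ) × Finset ℕ}
    (h : Step k n a p q) :
    FLe k (univ.image p.1) (univ.image q.1) ∧ univ.image p.1 ≠ univ.image q.1 := by
  obtain ⟨τ, j, hτ, hstrand, hq1, -, hstd⟩ := h
  have hinj : Injective p.1 := injective_of_card_image_univ (by rw [hτ.card_left, Fintype.card_fin])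
  have hq : univ.image q.1 = insert j ((univ.image p.1).erase (p.1 a)) :=
    hq1 ▸ image_update_univ hinj a j
  have hxj : p.1 a < j := (hτ.1.1 _ hstrand).1
  refine ⟨fle_of_count_le hstd.1 fun m => ?_, fun heq => hτ.snd_notMem_left hstrand ?_⟩
  · rw [hq, count_mem_eq_card_filter_lt, count_mem_eq_card_filter_lt]
    exact card_filter_insert_erase_le (mem_image_of_mem _ (mem_univ a)) hxj.trans
  · rw [heq, hq]
    exact mem_insert_self _ _

lemma fle_of_reflTransGen_step {k n : ℕ} {p q : (Fin k → ℕ) × Finset ℕ}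
    (h : Relation.ReflTransGen (fun p q => ∃ a, Step k n a p q) p q) :
    FLe k (univ.image p.1) (univ.image q.1) := by
  induction h with
  | refl => exact fun r _ => le_rfl
  | tail _ hstep ih =>
    obtain ⟨a, hstep⟩ := hstep
    exact ih.trans hstep.fle_and_ne.1

namespace IsLegalPath

variable {k n : ℕ} {states : List ((Fin k → ℕ) × Finset ℕ)} {idxs : List (Fin k)}

lemma isChain_step (h : IsLegalPath k n states idxs) :
    states.IsChain (fun p q => ∃ a, Step k n a p q) := by
  obtain ⟨hlen, hstep, -⟩ := h
  rw [List.isChain_iff_getElem]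
  intro i hi
  have hidx : i < idxs.length := by omega
  exact ⟨idxs[i], hstep i _ _ _ (List.getElem?_eq_getElem hidx) (List.getElem?_eq_getElem _)
    (List.getElem?_eq_getElem hi)⟩

lemma fle_head_getLast (h : IsLegalPath k n states idxs) {p q : (Fin k → ℕ) × Finset ℕ}
    (hp : states.head? = some p) (hq : states.getLast? = some q) :
    FLe k (univ.image p.1) (univ.image q.1) := by
  have hne : states ≠ [] := by rintro rfl; simp at hp
  rw [List.head?_eq_some_head hne, Option.some_inj] at hp
  rw [List.getLast?_eq_some_getLast hne, Option.some_inj] at hq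
  subst hp hq
  exact fle_of_reflTransGen_step (List.relationReflTransGen_of_exists_isChain _ h.isChain_step hne)

end IsLegalPath

/-- Each single swap step strictly increases the pair in the componentwise order on
first components, and consequently a legal path from `(I,J)` to `(K,L)` exists only if
`(I,J) ≤ (K,L)` in that order. -/
theorem stmt_7 (k n : ℕ) :
    (∀ (a : Fin k) (p q : (Fin k → ℕ) × Finset ℕ), Step k n a p q →
      FLe k (Finset.univ.image p.1) (Finset.univ.image q.1) ∧
        Finset.univ.image p.1 ≠ Finset.univ.image q.1) ∧
    (∀ (I J K L : Finset ℕ) (states : List ((Fin k → ℕ) × Finset ℕ))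
        (idxs : List (Fin k)), I.card = k →
      IsLegalPath k n states idxs →
      states.head? = some (sortedTuple k I, J) →
      (∃ q, states.getLast? = some q ∧ Finset.univ.image q.1 = K ∧ q.2 = L) →
      FLe k I K) := by
  refine ⟨fun a p q h => h.fle_and_ne, ?_⟩
  rintro I J K L states idxs hI hpath hhead ⟨q, hlast, rfl, -⟩
  simpa [image_sortedTuple hI] using hpath.fle_head_getLast hhead hlast
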